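/- arXiv:math/0206271 — 2 statements merged into one kernel-verified Lean document; each statement's English description precedes it below -/
import Mathlib

section
/- For all indices l, q, p ∈ {1,…,n}, and with n a free index in {1,…,n}, one has on U: Σ_{m,a,b} g^{n̄m} (∂̄_q g^{l̄a})(∂_m g^{b̄p}) g_{ab̄} = Σ_m (∂̄_q g^{l̄m})(∂_m g^{n̄p}) (equation (E:first) of the paper). -/
open scoped BigOperators

noncomputable section

/-- The `k`-th standard basis vector of `ℂⁿ`. -/
def ebasis (n : ℕ) (k : Fin n) : Fin n → ℂ := Pi.single k 1

/-- The holomorphic Wirtinger derivative `∂ₖ f`, computed via the real Fréchet derivative: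
`∂ₖ f (z) = (1/2) (Df(z)(eₖ) - i · Df(z)(i·eₖ))`. -/
def wdP (n : ℕ) (k : Fin n) (f : (Fin n → ℂ) → ℂ) : (Fin n → ℂ) → ℂ :=
  fun z => (1 / 2 : ℂ) *
    (fderiv ℝ f z (ebasis n k) - Complex.I * fderiv ℝ f z (Complex.I • ebasis n k))

/-- The antiholomorphic Wirtinger derivative `∂̄ₖ f`:
`∂̄ₖ f (z) = (1/2) (Df(z)(eₖ) + i · Df(z)(i·eₖ))`. -/
def wdB (n : ℕ) (k : Fin n) (f : (Fin n → ℂ) → ℂ) : (Fin n → ℂ) → ℂ :=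
  fun z => (1 / 2 : ℂ) *
    (fderiv ℝ f z (ebasis n k) + Complex.I * fderiv ℝ f z (Complex.I • ebasis n k))

/-- The Kähler potential viewed as a complex valued function. -/
def Phic (n : ℕ) (Φ : (Fin n → ℂ) → ℝ) : (Fin n → ℂ) → ℂ := fun z => (Φ z : ℂ)

/-- The metric `g_{k l̄} = ∂_k ∂̄_l Φ`. -/
def gdn (n : ℕ) (Φ : (Fin n → ℂ) → ℝ) (k l : Fin n) : (Fin n → ℂ) → ℂ :=
  wdP n k (wdB n l (Phic n Φ))

/-- `g_{k p t̄} = ∂_k ∂_p ∂̄_t Φ`. -/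
def g3h (n : ℕ) (Φ : (Fin n → ℂ) → ℝ) (k p t : Fin n) : (Fin n → ℂ) → ℂ :=
  wdP n k (wdP n p (wdB n t (Phic n Φ)))

/-- `g_{s q̄ l̄} = ∂_s ∂̄_q ∂̄_l Φ`. -/
def g3a (n : ℕ) (Φ : (Fin n → ℂ) → ℝ) (s q l : Fin n) : (Fin n → ℂ) → ℂ :=
  wdP n s (wdB n q (wdB n l (Phic n Φ)))

/-- `g_{a b̄ k l̄} = ∂_a ∂_k ∂̄_b ∂̄_l Φ`. -/
def g4 (n : ℕ) (Φ : (Fin n → ℂ) → ℝ) (a b k l : Fin n) : (Fin n → ℂ) → ℂ :=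
  wdP n a (wdP n k (wdB n b (wdB n l (Phic n Φ))))

variable {n : ℕ} {U : Set (Fin n → ℂ)} {f g : (Fin n → ℂ) → ℂ} {z : Fin n → ℂ}

lemma dv_contDiffOn (hU : IsOpen U) (hf : ContDiffOn ℝ (⊤ : ℕ∞) f U) (v : Fin n → ℂ) :
    ContDiffOn ℝ (⊤ : ℕ∞) (fun z => fderiv ℝ f z v) U := by
  have h := hf.fderiv_of_isOpen hU (m := (⊤ : ℕ∞)) (by simp)
  exact (ContinuousLinearMap.apply ℝ ℂ v).contDiff.comp_contDiffOn h

lemma dv_diffAt (hU : IsOpen U) (hf : ContDiffOn ℝ (⊤ : ℕ∞) f U) (v : Fin n → ℂ) (hz : z ∈ U) :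
    DifferentiableAt ℝ (fun z => fderiv ℝ f z v) z :=
  ((dv_contDiffOn hU hf v).differentiableOn (by simp)).differentiableAt (hU.mem_nhds hz)

lemma wdP_contDiffOn (hU : IsOpen U) (hf : ContDiffOn ℝ (⊤ : ℕ∞) f U) (k : Fin n) :
    ContDiffOn ℝ (⊤ : ℕ∞) (wdP n k f) U := by
  unfold wdP
  exact contDiffOn_const.mul ((dv_contDiffOn hU hf _).sub
    (contDiffOn_const.mul (dv_contDiffOn hU hf _)))

lemma wdB_contDiffOn (hU : IsOpen U) (hf : ContDiffOn ℝ (⊤ : ℕ∞) f U) (k : Fin n) :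
    ContDiffOn ℝ (⊤ : ℕ∞) (wdB n k f) U := by
  unfold wdB
  exact contDiffOn_const.mul ((dv_contDiffOn hU hf _).add
    (contDiffOn_const.mul (dv_contDiffOn hU hf _)))

lemma diffAt_of_contDiffOn (hU : IsOpen U) (hf : ContDiffOn ℝ (⊤ : ℕ∞) f U) (hz : z ∈ U) :
    DifferentiableAt ℝ f z :=
  ((hf.differentiableOn (by simp)).differentiableAt (hU.mem_nhds hz))

lemma fderiv_wdP_apply (hU : IsOpen U) (hf : ContDiffOn ℝ (⊤ : ℕ∞) f U) (hz : z ∈ U)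
    (k : Fin n) (w : Fin n → ℂ) :
    fderiv ℝ (wdP n k f) z w
      = (1 / 2 : ℂ) * (fderiv ℝ (fun y => fderiv ℝ f y (ebasis n k)) z w
          - Complex.I * fderiv ℝ (fun y => fderiv ℝ f y (Complex.I • ebasis n k)) z w) := by
  have hu := (dv_diffAt hU hf (ebasis n k) hz).hasFDerivAt
  have hv := (dv_diffAt hU hf (Complex.I • ebasis n k) hz).hasFDerivAt
  have h := ((hu.sub (hv.const_mul Complex.I)).const_mul ((1:ℂ)/2))
  have h2 : fderiv ℝ (wdP n k f) z = ((1:ℂ)/2) • (fderiv ℝ (fun y => fderiv ℝ f y (ebasis n k)) z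
      - Complex.I • fderiv ℝ (fun y => fderiv ℝ f y (Complex.I • ebasis n k)) z) := h.fderiv
  rw [h2]
  simp [smul_eq_mul]

lemma sec_symm (hU : IsOpen U) (hf : ContDiffOn ℝ (⊤ : ℕ∞) f U) (hz : z ∈ U) (v w : Fin n → ℂ) :
    fderiv ℝ (fun y => fderiv ℝ f y v) z w = fderiv ℝ (fun y => fderiv ℝ f y w) z v := by
  have hdf : ContDiffOn ℝ (⊤ : ℕ∞) (fderiv ℝ f) U := hf.fderiv_of_isOpen hU (m := (⊤ : ℕ∞)) (by simp)
  have h2 : HasFDerivAt (fderiv ℝ f) (fderiv ℝ (fderiv ℝ f) z) z :=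
    ((hdf.differentiableOn (by simp)).differentiableAt (hU.mem_nhds hz)).hasFDerivAt
  have hev : ∀ᶠ y in nhds z, HasFDerivAt f (fderiv ℝ f y) y := by
    filter_upwards [hU.mem_nhds hz] with y hy
    exact (diffAt_of_contDiffOn hU hf hy).hasFDerivAt
  have hsym := second_derivative_symmetric_of_eventually_of_real hev h2 w v
  have e1 : fderiv ℝ (fun y => fderiv ℝ f y v) z
      = (ContinuousLinearMap.apply ℝ ℂ v).comp (fderiv ℝ (fderiv ℝ f) z) :=
    ((ContinuousLinearMap.apply ℝ ℂ v).hasFDerivAt.comp z h2).fderiv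
  have e2 : fderiv ℝ (fun y => fderiv ℝ f y w) z
      = (ContinuousLinearMap.apply ℝ ℂ w).comp (fderiv ℝ (fderiv ℝ f) z) :=
    ((ContinuousLinearMap.apply ℝ ℂ w).hasFDerivAt.comp z h2).fderiv
  rw [e1, e2]
  simpa using hsym

lemma wdP_wdP_comm (hU : IsOpen U) (hf : ContDiffOn ℝ (⊤ : ℕ∞) f U) (hz : z ∈ U) (m k : Fin n) :
    wdP n m (wdP n k f) z = wdP n k (wdP n m f) z := by
  show (1 / 2 : ℂ) * (fderiv ℝ (wdP n k f) z (ebasis n m)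
      - Complex.I * fderiv ℝ (wdP n k f) z (Complex.I • ebasis n m))
    = (1 / 2 : ℂ) * (fderiv ℝ (wdP n m f) z (ebasis n k)
      - Complex.I * fderiv ℝ (wdP n m f) z (Complex.I • ebasis n k))
  rw [fderiv_wdP_apply hU hf hz k (ebasis n m),
      fderiv_wdP_apply hU hf hz k (Complex.I • ebasis n m),
      fderiv_wdP_apply hU hf hz m (ebasis n k),
      fderiv_wdP_apply hU hf hz m (Complex.I • ebasis n k),
      sec_symm hU hf hz (ebasis n k) (ebasis n m),
      sec_symm hU hf hz (ebasis n k) (Complex.I • ebasis n m),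
      sec_symm hU hf hz (Complex.I • ebasis n k) (ebasis n m),
      sec_symm hU hf hz (Complex.I • ebasis n k) (Complex.I • ebasis n m)]
  ring

lemma wdP_eqOn_const (hU : IsOpen U) (hz : z ∈ U) {c : ℂ}
    (h : Set.EqOn f (fun _ => c) U) (k : Fin n) : wdP n k f z = 0 := by
  have h1 : f =ᶠ[nhds z] (fun _ => c) := Filter.eventuallyEq_of_mem (hU.mem_nhds hz) h
  show (1 / 2 : ℂ) * _ = 0
  rw [h1.fderiv_eq, fderiv_fun_const]
  simp

lemma wdP_mul (hf : DifferentiableAt ℝ f z) (hg : DifferentiableAt ℝ g z) (k : Fin n) :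
    wdP n k (fun y => f y * g y) z = wdP n k f z * g z + f z * wdP n k g z := by
  show (1 / 2 : ℂ) * _ = _
  rw [fderiv_fun_mul hf hg]
  show (1 / 2 : ℂ) * ((f z • fderiv ℝ g z + g z • fderiv ℝ f z) (ebasis n k)
      - Complex.I * ((f z • fderiv ℝ g z + g z • fderiv ℝ f z) (Complex.I • ebasis n k))) = _
  simp only [ContinuousLinearMap.add_apply, ContinuousLinearMap.smul_apply, smul_eq_mul]
  show _ = (1 / 2 : ℂ) * _ * g z + f z * ((1 / 2 : ℂ) * _)
  ring

lemma wdP_sum {F : Fin n → (Fin n → ℂ) → ℂ} (h : ∀ b, DifferentiableAt ℝ (F b) z) (k : Fin n) :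
    wdP n k (fun y => ∑ b, F b y) z = ∑ b, wdP n k (F b) z := by
  show (1 / 2 : ℂ) * _ = _
  rw [fderiv_fun_sum (fun b _ => h b)]
  simp only [ContinuousLinearMap.sum_apply]
  rw [Finset.mul_sum, ← Finset.sum_sub_distrib, Finset.mul_sum]
  rfl

/-- equation (E:first). -/
theorem stmt_8 (n : ℕ) (hn : 1 ≤ n) (U : Set (Fin n → ℂ)) (hU : IsOpen U)
    (Φ : (Fin n → ℂ) → ℝ) (hΦ : ContDiffOn ℝ (⊤ : ℕ∞) Φ U)
    (ginv : Fin n → Fin n → (Fin n → ℂ) → ℂ)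
    (hginv : ∀ l k : Fin n, ContDiffOn ℝ (⊤ : ℕ∞) (ginv l k) U)
    (hinv1 : ∀ z ∈ U, ∀ l q : Fin n,
      (∑ k, ginv l k z * gdn n Φ k q z) = if l = q then 1 else 0)
    (hinv2 : ∀ z ∈ U, ∀ p k : Fin n,
      (∑ l, gdn n Φ p l z * ginv l k z) = if p = k then 1 else 0) :
    ∀ z ∈ U, ∀ l q p m' : Fin n,
      (∑ m, ∑ a, ∑ b, ginv m' m z * wdB n q (ginv l a) z * wdP n m (ginv b p) z * gdn n Φ a b z)
        = ∑ m, wdB n q (ginv l m) z * wdP n m (ginv m' p) z := by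
  intro z hz l q p m'
  have hPhic : ContDiffOn ℝ (⊤ : ℕ∞) (Phic n Φ) U :=
    Complex.ofRealCLM.contDiff.comp_contDiffOn hΦ
  have hGc : ∀ a b : Fin n, ContDiffOn ℝ (⊤ : ℕ∞) (gdn n Φ a b) U :=
    fun a b => wdP_contDiffOn hU (wdB_contDiffOn hU hPhic b) a
  have hdG : ∀ a b : Fin n, DifferentiableAt ℝ (gdn n Φ a b) z :=
    fun a b => diffAt_of_contDiffOn hU (hGc a b) hz
  have hdH : ∀ a b : Fin n, DifferentiableAt ℝ (ginv a b) z :=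
    fun a b => diffAt_of_contDiffOn hU (hginv a b) hz
  have hC : ∀ m a b : Fin n, wdP n m (gdn n Φ a b) z = wdP n a (gdn n Φ m b) z :=
    fun m a b => wdP_wdP_comm hU (wdB_contDiffOn hU hPhic b) hz m a
  -- Step A : differentiating hinv2 (indices a, p) in direction m
  have stepA : ∀ a m : Fin n,
      (∑ b, (wdP n m (gdn n Φ a b) z * ginv b p z + gdn n Φ a b z * wdP n m (ginv b p) z)) = 0 := by
    intro a m
    calc (∑ b, (wdP n m (gdn n Φ a b) z * ginv b p z + gdn n Φ a b z * wdP n m (ginv b p) z))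
        = ∑ b, wdP n m (fun y => gdn n Φ a b y * ginv b p y) z :=
          Finset.sum_congr rfl (fun b _ => (wdP_mul (hdG a b) (hdH b p) m).symm)
      _ = wdP n m (fun y => ∑ b, gdn n Φ a b y * ginv b p y) z :=
          (wdP_sum (fun b => (hdG a b).mul (hdH b p)) m).symm
      _ = 0 := wdP_eqOn_const hU hz (fun y hy => hinv2 y hy a p) m
  -- Step B : differentiating hinv1 (indices m', b) in direction a
  have stepB : ∀ b a : Fin n,
      (∑ m, (wdP n a (ginv m' m) z * gdn n Φ m b z + ginv m' m z * wdP n a (gdn n Φ m b) z)) = 0 := by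
    intro b a
    calc (∑ m, (wdP n a (ginv m' m) z * gdn n Φ m b z + ginv m' m z * wdP n a (gdn n Φ m b) z))
        = ∑ m, wdP n a (fun y => ginv m' m y * gdn n Φ m b y) z :=
          Finset.sum_congr rfl (fun m _ => (wdP_mul (hdH m' m) (hdG m b) a).symm)
      _ = wdP n a (fun y => ∑ m, ginv m' m y * gdn n Φ m b y) z :=
          (wdP_sum (fun m => (hdH m' m).mul (hdG m b)) a).symm
      _ = 0 := wdP_eqOn_const hU hz (fun y hy => hinv1 y hy m' b) a
  have key : ∀ a : Fin n,
      (∑ m, ∑ b, ginv m' m z * wdP n m (ginv b p) z * gdn n Φ a b z)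
        = wdP n a (ginv m' p) z := by
    intro a
    have e1 : ∀ m : Fin n,
        (∑ b, ginv m' m z * wdP n m (ginv b p) z * gdn n Φ a b z)
          = ∑ b, -(ginv m' m z * wdP n a (gdn n Φ m b) z) * ginv b p z := by
      intro m
      have hA : (∑ b, gdn n Φ a b z * wdP n m (ginv b p) z)
          = -(∑ b, wdP n m (gdn n Φ a b) z * ginv b p z) := by
        have h := stepA a m
        rw [Finset.sum_add_distrib] at h
        exact eq_neg_of_add_eq_zero_right h
      calc (∑ b, ginv m' m z * wdP n m (ginv b p) z * gdn n Φ a b z)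
          = ginv m' m z * ∑ b, gdn n Φ a b z * wdP n m (ginv b p) z := by
            rw [Finset.mul_sum]; exact Finset.sum_congr rfl (fun b _ => by ring)
        _ = ginv m' m z * -(∑ b, wdP n m (gdn n Φ a b) z * ginv b p z) := by rw [hA]
        _ = ginv m' m z * -(∑ b, wdP n a (gdn n Φ m b) z * ginv b p z) := by
            rw [Finset.sum_congr rfl (fun b _ => by rw [hC m a b])]
        _ = ∑ b, -(ginv m' m z * wdP n a (gdn n Φ m b) z) * ginv b p z := by
            rw [mul_neg, Finset.mul_sum, ← Finset.sum_neg_distrib]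
            exact Finset.sum_congr rfl (fun b _ => by ring)
    have e2 : ∀ b : Fin n,
        (∑ m, -(ginv m' m z * wdP n a (gdn n Φ m b) z) * ginv b p z)
          = ∑ m, wdP n a (ginv m' m) z * gdn n Φ m b z * ginv b p z := by
      intro b
      have hB : (∑ m, ginv m' m z * wdP n a (gdn n Φ m b) z)
          = -(∑ m, wdP n a (ginv m' m) z * gdn n Φ m b z) := by
        have h := stepB b a
        rw [Finset.sum_add_distrib] at h
        exact eq_neg_of_add_eq_zero_right h
      calc (∑ m, -(ginv m' m z * wdP n a (gdn n Φ m b) z) * ginv b p z)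
          = -(∑ m, ginv m' m z * wdP n a (gdn n Φ m b) z) * ginv b p z := by
            rw [← Finset.sum_neg_distrib, Finset.sum_mul]
        _ = (∑ m, wdP n a (ginv m' m) z * gdn n Φ m b z) * ginv b p z := by rw [hB, neg_neg]
        _ = ∑ m, wdP n a (ginv m' m) z * gdn n Φ m b z * ginv b p z := by rw [Finset.sum_mul]
    calc (∑ m, ∑ b, ginv m' m z * wdP n m (ginv b p) z * gdn n Φ a b z)
        = ∑ m, ∑ b, -(ginv m' m z * wdP n a (gdn n Φ m b) z) * ginv b p z :=
          Finset.sum_congr rfl (fun m _ => e1 m)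
      _ = ∑ b, ∑ m, -(ginv m' m z * wdP n a (gdn n Φ m b) z) * ginv b p z := Finset.sum_comm
      _ = ∑ b, ∑ m, wdP n a (ginv m' m) z * gdn n Φ m b z * ginv b p z :=
          Finset.sum_congr rfl (fun b _ => e2 b)
      _ = ∑ m, ∑ b, wdP n a (ginv m' m) z * gdn n Φ m b z * ginv b p z := Finset.sum_comm
      _ = ∑ m, wdP n a (ginv m' m) z * ∑ b, gdn n Φ m b z * ginv b p z := by
          exact Finset.sum_congr rfl (fun m _ => by
            rw [Finset.mul_sum]; exact Finset.sum_congr rfl (fun b _ => by ring))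
      _ = ∑ m, wdP n a (ginv m' m) z * (if m = p then 1 else 0) :=
          Finset.sum_congr rfl (fun m _ => by rw [hinv2 z hz m p])
      _ = wdP n a (ginv m' p) z := by simp
  calc (∑ m, ∑ a, ∑ b, ginv m' m z * wdB n q (ginv l a) z * wdP n m (ginv b p) z * gdn n Φ a b z)
      = ∑ a, ∑ m, ∑ b, ginv m' m z * wdB n q (ginv l a) z * wdP n m (ginv b p) z * gdn n Φ a b z :=
        Finset.sum_comm
    _ = ∑ a, wdB n q (ginv l a) z * wdP n a (ginv m' p) z := by
        refine Finset.sum_congr rfl (fun a _ => ?_)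
        rw [← key a, Finset.mul_sum]
        refine Finset.sum_congr rfl (fun m _ => ?_)
        rw [Finset.mul_sum]
        exact Finset.sum_congr rfl (fun b _ => by ring)
    _ = ∑ m, wdB n q (ginv l m) z * wdP n m (ginv m' p) z := rfl
end
end

section
/- Antiholomorphic Jacobi identity for the Kähler–Poisson tensor: for all indices k, n, m ∈ {1,…,n} one has on U: Σ_l g^{l̄k} (∂̄_l g^{n̄m}) = Σ_l g^{l̄m} (∂̄_l g^{n̄k}) (second identity of equation (E:jac) of the paper). -/
open scoped BigOperators ContDiff Topology

noncomputable section

section Helpers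

variable {n : ℕ} {U : Set (Fin n → ℂ)}

def Wop (n : ℕ) (c : ℂ) (k : Fin n) (f : (Fin n → ℂ) → ℂ) : (Fin n → ℂ) → ℂ :=
  fun z => (1 / 2 : ℂ) *
    (fderiv ℝ f z (ebasis n k) + c * fderiv ℝ f z (Complex.I • ebasis n k))

lemma diffAt (hU : IsOpen U) {g : (Fin n → ℂ) → ℂ} (h : ContDiffOn ℝ ∞ g U)
    {z : (Fin n → ℂ)} (hz : z ∈ U) : DifferentiableAt ℝ g z :=
  (h.differentiableOn (by simp)).differentiableAt (hU.mem_nhds hz)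

lemma fderiv_smoothOn (hU : IsOpen U) {g : (Fin n → ℂ) → ℂ} (h : ContDiffOn ℝ ∞ g U) :
    ContDiffOn ℝ ∞ (fderiv ℝ g) U :=
  h.fderiv_of_isOpen hU (le_of_eq rfl)

lemma Dv_smoothOn (hU : IsOpen U) {g : (Fin n → ℂ) → ℂ} (h : ContDiffOn ℝ ∞ g U)
    (v : Fin n → ℂ) : ContDiffOn ℝ ∞ (fun y => fderiv ℝ g y v) U :=
  (fderiv_smoothOn hU h).clm_apply contDiffOn_const

lemma Wop_smoothOn (hU : IsOpen U) {g : (Fin n → ℂ) → ℂ} (h : ContDiffOn ℝ ∞ g U)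
    (c : ℂ) (k : Fin n) : ContDiffOn ℝ ∞ (Wop n c k g) U := by
  apply ContDiffOn.mul contDiffOn_const
  exact (Dv_smoothOn hU h _).add (ContDiffOn.mul contDiffOn_const (Dv_smoothOn hU h _))

lemma Dv_comm (hU : IsOpen U) {f : (Fin n → ℂ) → ℂ} (hf : ContDiffOn ℝ ∞ f U)
    {z : Fin n → ℂ} (hz : z ∈ U) (v w : Fin n → ℂ) :
    fderiv ℝ (fun y => fderiv ℝ f y v) z w = fderiv ℝ (fun y => fderiv ℝ f y w) z v := by
  set f' := fderiv ℝ f with hf'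
  have hev : ∀ᶠ y in 𝓝 z, HasFDerivAt f (f' y) y := by
    filter_upwards [hU.mem_nhds hz] with y hy
    exact (diffAt hU hf hy).hasFDerivAt
  have hdiff' : DifferentiableAt ℝ f' z :=
    ((fderiv_smoothOn hU hf).differentiableOn (by simp)).differentiableAt
      (hU.mem_nhds hz)
  set f'' := fderiv ℝ f' z with hf''
  have hder : HasFDerivAt f' f'' z := hdiff'.hasFDerivAt
  have hsymm : ∀ v w, f'' v w = f'' w v := fun v w =>
    second_derivative_symmetric_of_eventually hev hder v w
  have key : ∀ u : Fin n → ℂ, fderiv ℝ (fun y => f' y u) z =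
      (ContinuousLinearMap.apply ℝ ℂ u).comp f'' := by
    intro u
    exact (((ContinuousLinearMap.apply ℝ ℂ u).hasFDerivAt).comp z hder).fderiv
  rw [key v, key w]
  simpa using hsymm w v

lemma Wop_congr (hU : IsOpen U) {f g : (Fin n → ℂ) → ℂ} (hfg : ∀ y ∈ U, f y = g y)
    {z : Fin n → ℂ} (hz : z ∈ U) (c : ℂ) (k : Fin n) : Wop n c k f z = Wop n c k g z := by
  have h : f =ᶠ[𝓝 z] g := by filter_upwards [hU.mem_nhds hz] with y hy using hfg y hy
  simp only [Wop, h.fderiv_eq]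

lemma Wop_const {z : Fin n → ℂ} (c a : ℂ) (k : Fin n) :
    Wop n c k (fun _ => a) z = 0 := by
  simp [Wop, fderiv_const]

lemma Wop_sum {ι : Type*} (s : Finset ι) {f : ι → (Fin n → ℂ) → ℂ} {z : Fin n → ℂ}
    (hf : ∀ i ∈ s, DifferentiableAt ℝ (f i) z) (c : ℂ) (k : Fin n) :
    Wop n c k (fun y => ∑ i ∈ s, f i y) z = ∑ i ∈ s, Wop n c k (f i) z := by
  simp only [Wop]
  rw [fderiv_fun_sum hf]
  simp only [ContinuousLinearMap.coe_sum', Finset.sum_apply]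
  simp only [Finset.mul_sum, ← Finset.sum_add_distrib]

lemma Wop_mul {f g : (Fin n → ℂ) → ℂ} {z : Fin n → ℂ}
    (hf : DifferentiableAt ℝ f z) (hg : DifferentiableAt ℝ g z) (c : ℂ) (k : Fin n) :
    Wop n c k (fun y => f y * g y) z = Wop n c k f z * g z + f z * Wop n c k g z := by
  simp only [Wop]
  rw [fderiv_fun_mul hf hg]
  simp only [ContinuousLinearMap.add_apply, ContinuousLinearMap.smul_apply, smul_eq_mul]
  ring_nf

lemma fderiv_comb {G H : (Fin n → ℂ) → ℂ} {z : Fin n → ℂ}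
    (hG : DifferentiableAt ℝ G z) (hH : DifferentiableAt ℝ H z) (a d : ℂ) (u : Fin n → ℂ) :
    fderiv ℝ (fun y => a * (G y + d * H y)) z u
      = a * (fderiv ℝ G z u + d * fderiv ℝ H z u) := by
  rw [fderiv_const_mul (a := fun y => G y + d * H y) (hG.add (hH.const_mul d)), fderiv_fun_add hG (hH.const_mul d),
    fderiv_const_mul hH]
  simp only [ContinuousLinearMap.add_apply, ContinuousLinearMap.smul_apply, smul_eq_mul]

lemma Wop_comm (hU : IsOpen U) {f : (Fin n → ℂ) → ℂ} (hf : ContDiffOn ℝ ∞ f U)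
    {z : Fin n → ℂ} (hz : z ∈ U) (c d : ℂ) (j l : Fin n) :
    Wop n c j (Wop n d l f) z = Wop n d l (Wop n c j f) z := by
  have hD : ∀ v : Fin n → ℂ, DifferentiableAt ℝ (fun y => fderiv ℝ f y v) z :=
    fun v => diffAt hU (Dv_smoothOn hU hf v) hz
  have hw : ∀ (a : ℂ) (u v w : Fin n → ℂ),
      fderiv ℝ (fun y => (1/2 : ℂ) * (fderiv ℝ f y v + a * fderiv ℝ f y w)) z u
        = (1/2 : ℂ) * (fderiv ℝ (fun y => fderiv ℝ f y v) z u
            + a * fderiv ℝ (fun y => fderiv ℝ f y w) z u) :=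
    fun a u v w => fderiv_comb (hD v) (hD w) _ a u
  unfold Wop
  simp only [hw]
  rw [Dv_comm hU hf hz (ebasis n j) (ebasis n l),
    Dv_comm hU hf hz (ebasis n j) (Complex.I • ebasis n l),
    Dv_comm hU hf hz (Complex.I • ebasis n j) (ebasis n l),
    Dv_comm hU hf hz (Complex.I • ebasis n j) (Complex.I • ebasis n l)]
  ring

lemma wdB_eq (k : Fin n) (f : (Fin n → ℂ) → ℂ) : wdB n k f = Wop n Complex.I k f := rfl

lemma wdP_eq (k : Fin n) (f : (Fin n → ℂ) → ℂ) : wdP n k f = Wop n (-Complex.I) k f := by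
  funext z; simp only [wdP, Wop]; ring

lemma Phic_smoothOn {Φ : (Fin n → ℂ) → ℝ} (hΦ : ContDiffOn ℝ ∞ Φ U) :
    ContDiffOn ℝ ∞ (Phic n Φ) U :=
  Complex.ofRealCLM.contDiff.comp_contDiffOn hΦ

lemma gdn_smoothOn (hU : IsOpen U) {Φ : (Fin n → ℂ) → ℝ} (hΦ : ContDiffOn ℝ ∞ Φ U)
    (p q : Fin n) : ContDiffOn ℝ ∞ (gdn n Φ p q) U := by
  unfold gdn
  rw [wdP_eq, wdB_eq]
  exact Wop_smoothOn hU (Wop_smoothOn hU (Phic_smoothOn hΦ) _ _) _ _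

lemma gdn_sym (hU : IsOpen U) {Φ : (Fin n → ℂ) → ℝ} (hΦ : ContDiffOn ℝ ∞ Φ U)
    {z : Fin n → ℂ} (hz : z ∈ U) (j p q : Fin n) :
    wdB n j (gdn n Φ p q) z = wdB n q (gdn n Φ p j) z := by
  have h0 : ContDiffOn ℝ ∞ (Phic n Φ) U := Phic_smoothOn hΦ
  have hq : ∀ q : Fin n, ContDiffOn ℝ ∞ (Wop n Complex.I q (Phic n Φ)) U :=
    fun q => Wop_smoothOn hU h0 _ _
  unfold gdn
  simp only [wdP_eq, wdB_eq]
  calc Wop n Complex.I j (Wop n (-Complex.I) p (Wop n Complex.I q (Phic n Φ))) z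
      = Wop n (-Complex.I) p (Wop n Complex.I j (Wop n Complex.I q (Phic n Φ))) z := by
        rw [Wop_comm hU (hq q) hz]
    _ = Wop n (-Complex.I) p (Wop n Complex.I q (Wop n Complex.I j (Phic n Φ))) z := by
        refine Wop_congr hU (fun y hy => ?_) hz _ _
        exact Wop_comm hU h0 hy _ _ _ _
    _ = Wop n Complex.I q (Wop n (-Complex.I) p (Wop n Complex.I j (Phic n Φ))) z := by
        rw [Wop_comm hU (hq j) hz]

lemma inv_deriv (hU : IsOpen U) {Φ : (Fin n → ℂ) → ℝ} (hΦ : ContDiffOn ℝ ∞ Φ U)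
    (ginv : Fin n → Fin n → (Fin n → ℂ) → ℂ)
    (hginv : ∀ l k : Fin n, ContDiffOn ℝ ∞ (ginv l k) U)
    (hinv1 : ∀ z ∈ U, ∀ l q : Fin n,
      (∑ k, ginv l k z * gdn n Φ k q z) = if l = q then 1 else 0)
    (hinv2 : ∀ z ∈ U, ∀ p k : Fin n,
      (∑ l, gdn n Φ p l z * ginv l k z) = if p = k then 1 else 0)
    {z : Fin n → ℂ} (hz : z ∈ U) (j a b : Fin n) :
    wdB n j (ginv a b) z
      = -∑ p, ∑ l, ginv a p z * (wdB n j (gdn n Φ p l) z * ginv l b z) := by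
  simp only [wdB_eq]
  have hdg : ∀ p q : Fin n, DifferentiableAt ℝ (gdn n Φ p q) z :=
    fun p q => diffAt hU (gdn_smoothOn hU hΦ p q) hz
  have hdi : ∀ l k : Fin n, DifferentiableAt ℝ (ginv l k) z :=
    fun l k => diffAt hU (hginv l k) hz
  have key : ∀ p : Fin n, (∑ l, (Wop n Complex.I j (gdn n Φ p l) z * ginv l b z
      + gdn n Φ p l z * Wop n Complex.I j (ginv l b) z)) = 0 := by
    intro p
    have h1 : Wop n Complex.I j (fun y => ∑ l, gdn n Φ p l y * ginv l b y) z = 0 := by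
      rw [Wop_congr hU (fun y hy => hinv2 y hy p b) hz]
      exact Wop_const _ _ _
    rw [← h1, Wop_sum Finset.univ (f := fun l y => gdn n Φ p l y * ginv l b y) (fun l _ => (hdg p l).mul (hdi l b))]
    exact Finset.sum_congr rfl fun l _ => (Wop_mul (hdg p l) (hdi l b) _ _).symm
  have main : ∑ p, ginv a p z * (∑ l, (Wop n Complex.I j (gdn n Φ p l) z * ginv l b z
      + gdn n Φ p l z * Wop n Complex.I j (ginv l b) z)) = 0 := by
    simp [key]
  have expand : ∑ p, ginv a p z * (∑ l, (Wop n Complex.I j (gdn n Φ p l) z * ginv l b z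
        + gdn n Φ p l z * Wop n Complex.I j (ginv l b) z))
      = (∑ p, ∑ l, ginv a p z * (Wop n Complex.I j (gdn n Φ p l) z * ginv l b z))
        + ∑ l, (∑ p, ginv a p z * gdn n Φ p l z) * Wop n Complex.I j (ginv l b) z := by
    simp only [Finset.mul_sum, mul_add, Finset.sum_add_distrib]
    congr 1
    rw [Finset.sum_comm]
    exact Finset.sum_congr rfl fun l _ => by
      rw [Finset.sum_mul]
      exact Finset.sum_congr rfl fun p _ => by ring
  rw [expand] at main
  have hsec : ∑ l, (∑ p, ginv a p z * gdn n Φ p l z) * Wop n Complex.I j (ginv l b) z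
      = Wop n Complex.I j (ginv a b) z := by
    have h2 : ∀ l : Fin n, (∑ p, ginv a p z * gdn n Φ p l z)
        = if a = l then 1 else 0 := fun l => hinv1 z hz a l
    simp only [h2, ite_mul, one_mul, zero_mul]
    simp
  rw [hsec] at main
  linear_combination main

lemma triple_swap {F : Fin n → Fin n → Fin n → ℂ} :
    ∑ j, ∑ p, ∑ q, F j p q = ∑ j, ∑ p, ∑ q, F q p j :=
  calc ∑ j, ∑ p, ∑ q, F j p q
      = ∑ j, ∑ q, ∑ p, F j p q := Finset.sum_congr rfl fun _ _ => Finset.sum_comm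
    _ = ∑ q, ∑ j, ∑ p, F j p q := Finset.sum_comm
    _ = ∑ q, ∑ p, ∑ j, F j p q := Finset.sum_congr rfl fun _ _ => Finset.sum_comm


end Helpers

/-- antiholomorphic Jacobi identity:
`Σ_l g^{l̄k} (∂̄_l g^{n̄m}) = Σ_l g^{l̄m} (∂̄_l g^{n̄k})` on `U`. -/
theorem stmt_12 (n : ℕ) (hn : 1 ≤ n) (U : Set (Fin n → ℂ)) (hU : IsOpen U)
    (Φ : (Fin n → ℂ) → ℝ) (hΦ : ContDiffOn ℝ (⊤ : ℕ∞) Φ U)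
    (ginv : Fin n → Fin n → (Fin n → ℂ) → ℂ)
    (hginv : ∀ l k : Fin n, ContDiffOn ℝ (⊤ : ℕ∞) (ginv l k) U)
    (hinv1 : ∀ z ∈ U, ∀ l q : Fin n,
      (∑ k, ginv l k z * gdn n Φ k q z) = if l = q then 1 else 0)
    (hinv2 : ∀ z ∈ U, ∀ p k : Fin n,
      (∑ l, gdn n Φ p l z * ginv l k z) = if p = k then 1 else 0) :
    ∀ z ∈ U, ∀ k m' m : Fin n,
      (∑ l, ginv l k z * wdB n l (ginv m' m) z)
        = ∑ l, ginv l m z * wdB n l (ginv m' k) z := by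
  intro z hz k m' m
  have hΦ' : ContDiffOn ℝ ∞ Φ U := hΦ.of_le (by simp)
  have hginv' : ∀ l k : Fin n, ContDiffOn ℝ ∞ (ginv l k) U :=
    fun l k => (hginv l k).of_le (by simp)
  have hS : ∀ k m : Fin n, ∑ l, ginv l k z * wdB n l (ginv m' m) z
      = -∑ j, ∑ p, ∑ q, ginv j k z
          * (ginv m' p z * (wdB n j (gdn n Φ p q) z * ginv q m z)) := by
    intro k m
    rw [Finset.sum_congr rfl (fun j (_ : j ∈ Finset.univ) => by
      rw [inv_deriv hU hΦ' ginv hginv' hinv1 hinv2 hz j m' m])]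
    simp only [mul_neg, Finset.mul_sum, ← Finset.sum_neg_distrib]
  rw [hS k m, hS m k]
  congr 1
  calc ∑ j, ∑ p, ∑ q, ginv j k z * (ginv m' p z * (wdB n j (gdn n Φ p q) z * ginv q m z))
      = ∑ j, ∑ p, ∑ q, ginv j k z * (ginv m' p z * (wdB n q (gdn n Φ p j) z * ginv q m z)) := by
        refine Finset.sum_congr rfl fun j _ => Finset.sum_congr rfl fun p _ =>
          Finset.sum_congr rfl fun q _ => ?_
        rw [gdn_sym hU hΦ' hz j p q]
    _ = ∑ j, ∑ p, ∑ q, ginv q k z * (ginv m' p z * (wdB n j (gdn n Φ p q) z * ginv j m z)) :=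
        triple_swap
    _ = ∑ j, ∑ p, ∑ q, ginv j m z * (ginv m' p z * (wdB n j (gdn n Φ p q) z * ginv q k z)) := by
        refine Finset.sum_congr rfl fun j _ => Finset.sum_congr rfl fun p _ =>
          Finset.sum_congr rfl fun q _ => ?_
        ring
end
end
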